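/- Relative entropy identity for the KKT function: Let 0 < σ₁ < σ₂, let X* be a random variable with |X*| ≤ A a.s., and let f_{Y₁}(y) = E[φ_{σ₁}(y − X*)], f_{Y₂}(y) = E[φ_{σ₂}(y − X*)]. Then for every x ∈ ℝ, D(φ_{σ₁}(· − x) ‖ f_{Y₁}) − D(φ_{σ₂}(· − x) ‖ f_{Y₂}) = E[g(x + N₁)] + log(σ₂/σ₁), where N₁ ~ N(0,σ₁²), g(y) = E[log(f_{Y₂}(y + N)/f_{Y₁}(y))], and N ~ N(0, σ₂² − σ₁²) independent of N₁. -/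

import Mathlib

open MeasureTheory Real

noncomputable def gaussPdf (σ t : ℝ) : ℝ :=
  (Real.sqrt (2 * Real.pi * σ ^ 2))⁻¹ * Real.exp (-(t ^ 2) / (2 * σ ^ 2))

/-- The Kullback–Leibler divergence between densities `p` and `q` on `ℝ`. -/
noncomputable def klDivPdf (p q : ℝ → ℝ) : ℝ :=
  ∫ y, p y * Real.log (p y / q y)

/-! Shifting by `x` gives `D(φ_σ(· - x) ‖ f) = -log (√(2π) σ) - 1/2 - E[log f (x + Z_σ)]` with
`Z_σ ~ N(0, σ²)`. Gaussians convolve to Gaussians, `N(0, σ₁²) ∗ N(0, σ₂² - σ₁²) = N(0, σ₂²)`, so by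
Fubini `E[g (x + N₁)] = E[log f_{Y₂} (x + Z_{σ₂})] - E[log f_{Y₁} (x + Z_{σ₁})]`, and the entropy terms
leave `log (σ₂ / σ₁)`. Every expectation is finite because `X*` is bounded:
`φ_σ(|y| + A) ≤ f_Y(y) ≤ φ_σ(0)`, so `|log f_Y|` grows at most quadratically. -/

open ProbabilityTheory
open scoped NNReal

lemma integrable_comp_const_add_of_abs_le_quadratic {ν : Measure ℝ} [IsFiniteMeasure ν]
    (hν : MemLp id 2 ν) {L : ℝ → ℝ} (hL : Measurable L) {C c : ℝ}
    (hbound : ∀ y, |L y| ≤ C + c * y ^ 2) (x : ℝ) :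
    Integrable (fun n => L (x + n)) ν := by
  refine Integrable.mono' (g := fun n => C + c * (x + n) ^ 2) ?_
    (hL.comp (measurable_const_add x)).aestronglyMeasurable
    (ae_of_all _ fun n => (Real.norm_eq_abs _).trans_le (hbound (x + n)))
  exact (integrable_const C).add (((memLp_const x).add hν).integrable_sq.const_mul c)

lemma MeasureTheory.Integrable.integral_conv_left {M F : Type*} [AddMonoid M] [MeasurableSpace M]
    [MeasurableAdd₂ M] [NormedAddCommGroup F] [NormedSpace ℝ F] {μ ν : Measure M} [SFinite ν]
    {f : M → F} (hf : Integrable f (μ ∗ ν)) :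
    Integrable (fun x => ∫ y, f (x + y) ∂ν) μ :=
  ((integrable_map_measure hf.aestronglyMeasurable (by fun_prop)).1 hf).integral_prod_left

lemma gaussPdf_eq_gaussianPDFReal (σ : ℝ) : gaussPdf σ = gaussianPDFReal 0 (σ ^ 2).toNNReal := by
  ext t
  simp [gaussPdf, gaussianPDFReal, Real.coe_toNNReal _ (sq_nonneg σ)]

lemma integral_mul_gaussPdf {σ : ℝ} (hσ : σ ≠ 0) (h : ℝ → ℝ) :
    ∫ n, h n * gaussPdf σ n = ∫ n, h n ∂gaussianReal 0 (σ ^ 2).toNNReal := by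
  rw [integral_gaussianReal_eq_integral_smul (by simpa using hσ), gaussPdf_eq_gaussianPDFReal]
  simp_rw [smul_eq_mul, mul_comm]

lemma gaussPdf_pos {σ : ℝ} (hσ : σ ≠ 0) (t : ℝ) : 0 < gaussPdf σ t := by
  rw [gaussPdf_eq_gaussianPDFReal]
  exact gaussianPDFReal_pos _ _ _ (by simpa using hσ)

@[fun_prop]
lemma continuous_gaussPdf (σ : ℝ) : Continuous (gaussPdf σ) := by
  unfold gaussPdf
  fun_prop

lemma gaussPdf_le_of_abs_le (σ : ℝ) {s t : ℝ} (h : |s| ≤ |t|) : gaussPdf σ t ≤ gaussPdf σ s := by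
  have hsq : s ^ 2 ≤ t ^ 2 := sq_le_sq.2 h
  unfold gaussPdf
  gcongr

lemma gaussPdf_nonneg (σ t : ℝ) : 0 ≤ gaussPdf σ t := by
  unfold gaussPdf
  positivity

lemma norm_gaussPdf_le (σ t : ℝ) : ‖gaussPdf σ t‖ ≤ gaussPdf σ 0 := by
  rw [Real.norm_eq_abs, abs_of_nonneg (gaussPdf_nonneg σ t)]
  exact gaussPdf_le_of_abs_le σ (by simp)

lemma log_gaussPdf {σ : ℝ} (hσ : σ ≠ 0) (t : ℝ) :
    log (gaussPdf σ t) = -log √(2 * π) - log σ - t ^ 2 / (2 * σ ^ 2) := by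
  have hsqrt : √(2 * π * σ ^ 2) = √(2 * π) * |σ| := by
    rw [Real.sqrt_mul (by positivity), Real.sqrt_sq_eq_abs]
  rw [gaussPdf, hsqrt, log_mul (by positivity) (exp_ne_zero _), log_inv,
    log_mul (by positivity) (by positivity), log_abs, log_exp]
  ring

lemma integral_sq_gaussianReal (v : ℝ≥0) : ∫ n, n ^ 2 ∂gaussianReal 0 v = v := by
  rw [← variance_of_integral_eq_zero aemeasurable_id' integral_id_gaussianReal,
    variance_fun_id_gaussianReal]

lemma integrable_sq_gaussianReal (m : ℝ) (v : ℝ≥0) : Integrable (fun n => n ^ 2) (gaussianReal m v) :=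
  (memLp_id_gaussianReal 2).integrable_sq

lemma integrable_log_gaussPdf {σ : ℝ} (hσ : σ ≠ 0) (m : ℝ) (v : ℝ≥0) :
    Integrable (fun n => log (gaussPdf σ n)) (gaussianReal m v) := by
  simp_rw [log_gaussPdf hσ]
  exact (integrable_const _).sub ((integrable_sq_gaussianReal m v).div_const _)

lemma integral_log_gaussPdf {σ : ℝ} (hσ : σ ≠ 0) :
    ∫ n, log (gaussPdf σ n) ∂gaussianReal 0 (σ ^ 2).toNNReal = -log √(2 * π) - log σ - 1 / 2 := by
  simp_rw [log_gaussPdf hσ]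
  rw [integral_sub (integrable_const _) ((integrable_sq_gaussianReal _ _).div_const _),
    integral_const, integral_div, integral_sq_gaussianReal, Real.coe_toNNReal _ (sq_nonneg σ)]
  field_simp
  simp

noncomputable def gaussMixture (σ : ℝ) (μ : Measure ℝ) (y : ℝ) : ℝ :=
  ∫ x, gaussPdf σ (y - x) ∂μ

section gaussMixture

variable {A : ℝ} {μ : Measure ℝ} [IsProbabilityMeasure μ]

lemma gaussMixture_le_gaussPdf_zero (σ : ℝ) (y : ℝ) : gaussMixture σ μ y ≤ gaussPdf σ 0 := by
  simpa [gaussMixture] using (le_abs_self _).trans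
    (norm_integral_le_of_norm_le_const (ae_of_all μ fun x => norm_gaussPdf_le σ (y - x)))

lemma gaussPdf_le_gaussMixture (σ : ℝ) (hμ : ∀ᵐ x ∂μ, |x| ≤ A) (y : ℝ) :
    gaussPdf σ (|y| + A) ≤ gaussMixture σ μ y := by
  have hint : Integrable (fun x => gaussPdf σ (y - x)) μ :=
    .of_bound (by fun_prop) (gaussPdf σ 0) (ae_of_all _ fun x => norm_gaussPdf_le σ (y - x))
  have hle : ∀ᵐ x ∂μ, gaussPdf σ (|y| + A) ≤ gaussPdf σ (y - x) := by
    filter_upwards [hμ] with x hx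
    refine gaussPdf_le_of_abs_le σ ((abs_sub y x).trans ?_)
    linarith [le_abs_self (|y| + A)]
  simpa [gaussMixture] using integral_mono_ae (integrable_const _) hint hle

lemma gaussMixture_pos {σ : ℝ} (hσ : σ ≠ 0) (hμ : ∀ᵐ x ∂μ, |x| ≤ A) (y : ℝ) : 0 < gaussMixture σ μ y :=
  (gaussPdf_pos hσ _).trans_le (gaussPdf_le_gaussMixture σ hμ y)

lemma continuous_gaussMixture (σ : ℝ) : Continuous (gaussMixture σ μ) :=
  continuous_of_dominated (fun _ => by fun_prop)
    (fun y => ae_of_all _ fun x => norm_gaussPdf_le σ (y - x)) (integrable_const _)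
    (ae_of_all _ fun _ => by fun_prop)

lemma abs_log_gaussMixture_le {σ : ℝ} (hσ : σ ≠ 0) (hμ : ∀ᵐ x ∂μ, |x| ≤ A) :
    ∃ C c : ℝ, ∀ y, |log (gaussMixture σ μ y)| ≤ C + c * y ^ 2 := by
  set K := -log √(2 * π) - log σ
  refine ⟨|K| + A ^ 2 / σ ^ 2, 1 / σ ^ 2, fun y => abs_le.2 ⟨?_, ?_⟩⟩
  · have hlower : K - (|y| + A) ^ 2 / (2 * σ ^ 2) ≤ log (gaussMixture σ μ y) := by
      rw [← log_gaussPdf hσ]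
      exact log_le_log (gaussPdf_pos hσ _) (gaussPdf_le_gaussMixture σ hμ y)
    have hquad : (|y| + A) ^ 2 / (2 * σ ^ 2) ≤ A ^ 2 / σ ^ 2 + 1 / σ ^ 2 * y ^ 2 := by
      rw [div_le_iff₀ (by positivity)]
      field_simp
      nlinarith [sq_abs y, sq_nonneg (|y| - A)]
    linarith [neg_abs_le K]
  · have hupper : log (gaussMixture σ μ y) ≤ K := by
      simpa [K, log_gaussPdf hσ] using
        log_le_log (gaussMixture_pos hσ hμ y) (gaussMixture_le_gaussPdf_zero σ y)
    have : 0 ≤ A ^ 2 / σ ^ 2 + 1 / σ ^ 2 * y ^ 2 := by positivity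
    linarith [le_abs_self K]

lemma integrable_log_gaussMixture_comp_add {σ : ℝ} (hσ : σ ≠ 0) (hμ : ∀ᵐ x ∂μ, |x| ≤ A)
    {ν : Measure ℝ} [IsFiniteMeasure ν] (hν : MemLp id 2 ν) (x : ℝ) :
    Integrable (fun n => log (gaussMixture σ μ (x + n))) ν := by
  obtain ⟨C, c, hbound⟩ := abs_log_gaussMixture_le hσ hμ
  exact integrable_comp_const_add_of_abs_le_quadratic hν
    ((continuous_gaussMixture σ).measurable.log) hbound x

end gaussMixture

lemma klDivPdf_gaussPdf_sub {σ : ℝ} (hσ : σ ≠ 0) {f : ℝ → ℝ} (hf : ∀ y, f y ≠ 0) {x : ℝ}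
    (hint : Integrable (fun n => log (f (x + n))) (gaussianReal 0 (σ ^ 2).toNNReal)) :
    klDivPdf (fun y => gaussPdf σ (y - x)) f
      = -log √(2 * π) - log σ - 1 / 2
        - ∫ n, log (f (x + n)) ∂gaussianReal 0 (σ ^ 2).toNNReal := by
  calc klDivPdf (fun y => gaussPdf σ (y - x)) f
      = ∫ n, log (gaussPdf σ n / f (x + n)) * gaussPdf σ n := by
        rw [klDivPdf, ← integral_add_left_eq_self _ x]
        simp_rw [add_sub_cancel_left, mul_comm]
    _ = ∫ n, (log (gaussPdf σ n) - log (f (x + n))) ∂gaussianReal 0 (σ ^ 2).toNNReal := by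
        rw [integral_mul_gaussPdf hσ]
        simp_rw [log_div (gaussPdf_pos hσ _).ne' (hf _)]
    _ = _ := by
        rw [integral_sub (integrable_log_gaussPdf hσ _ _) hint, integral_log_gaussPdf hσ]

theorem kkt_relative_entropy_identity_general
    (σ1 σ2 A : ℝ) (h1 : 0 < σ1) (h12 : σ1 < σ2)
    (μ : Measure ℝ) [IsProbabilityMeasure μ] (hμ : ∀ᵐ x ∂μ, |x| ≤ A)
    (fY1 fY2 g : ℝ → ℝ)
    (hfY1 : ∀ y, fY1 y = ∫ x, gaussPdf σ1 (y - x) ∂μ)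
    (hfY2 : ∀ y, fY2 y = ∫ x, gaussPdf σ2 (y - x) ∂μ)
    (hg : ∀ y, g y =
      (∫ n, Real.log (fY2 (y + n)) * gaussPdf (Real.sqrt (σ2 ^ 2 - σ1 ^ 2)) n)
        - Real.log (fY1 y)) :
    ∀ x : ℝ,
      klDivPdf (fun y => gaussPdf σ1 (y - x)) fY1
          - klDivPdf (fun y => gaussPdf σ2 (y - x)) fY2
        = (∫ n, g (x + n) * gaussPdf σ1 n) + Real.log (σ2 / σ1) := by
  intro x
  obtain rfl : fY1 = gaussMixture σ1 μ := funext hfY1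
  obtain rfl : fY2 = gaussMixture σ2 μ := funext hfY2
  have h2 : 0 < σ2 := h1.trans h12
  set τ := √(σ2 ^ 2 - σ1 ^ 2)
  have hτ : τ ≠ 0 := (Real.sqrt_pos.2 (by nlinarith)).ne'
  have hconv : gaussianReal 0 (σ1 ^ 2).toNNReal ∗ gaussianReal 0 (τ ^ 2).toNNReal
      = gaussianReal 0 (σ2 ^ 2).toNNReal := by
    rw [gaussianReal_conv_gaussianReal, add_zero, ← Real.toNNReal_add (sq_nonneg _) (sq_nonneg _),
      Real.sq_sqrt (by nlinarith), add_sub_cancel]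
  have hL1 := integrable_log_gaussMixture_comp_add (ν := gaussianReal 0 (σ1 ^ 2).toNNReal)
    h1.ne' hμ (memLp_id_gaussianReal 2) x
  have hL2 := integrable_log_gaussMixture_comp_add (ν := gaussianReal 0 (σ2 ^ 2).toNNReal)
    h2.ne' hμ (memLp_id_gaussianReal 2) x
  rw [← hconv] at hL2
  simp_rw [hg, integral_mul_gaussPdf hτ, integral_mul_gaussPdf h1.ne', add_assoc]
  rw [klDivPdf_gaussPdf_sub h1.ne' (fun y => (gaussMixture_pos h1.ne' hμ y).ne') hL1,
    klDivPdf_gaussPdf_sub h2.ne' (fun y => (gaussMixture_pos h2.ne' hμ y).ne') (hconv ▸ hL2),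
    integral_sub hL2.integral_conv_left hL1, ← integral_conv hL2, hconv,
    log_div h2.ne' h1.ne']
  ring

/-- Relative entropy identity for the KKT function:
`D(φ_{σ₁}(·−x) ‖ f_{Y₁}) − D(φ_{σ₂}(·−x) ‖ f_{Y₂}) = E[g(x+N₁)] + log(σ₂/σ₁)`. -/
theorem kkt_relative_entropy_identity
    (σ1 σ2 A : ℝ) (h1 : 0 < σ1) (h12 : σ1 < σ2) (hA : 0 < A)
    (μ : Measure ℝ) [IsProbabilityMeasure μ] (hμ : ∀ᵐ x ∂μ, |x| ≤ A)
    (fY1 fY2 g : ℝ → ℝ)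
    (hfY1 : ∀ y, fY1 y = ∫ x, gaussPdf σ1 (y - x) ∂μ)
    (hfY2 : ∀ y, fY2 y = ∫ x, gaussPdf σ2 (y - x) ∂μ)
    (hg : ∀ y, g y =
      (∫ n, Real.log (fY2 (y + n)) * gaussPdf (Real.sqrt (σ2 ^ 2 - σ1 ^ 2)) n)
        - Real.log (fY1 y)) :
    ∀ x : ℝ,
      klDivPdf (fun y => gaussPdf σ1 (y - x)) fY1
          - klDivPdf (fun y => gaussPdf σ2 (y - x)) fY2
        = (∫ n, g (x + n) * gaussPdf σ1 n) + Real.log (σ2 / σ1) :=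
  kkt_relative_entropy_identity_general σ1 σ2 A h1 h12 μ hμ fY1 fY2 g hfY1 hfY2 hg
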